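/- Let σ be a generator of Gal(𝔽_{q^m}/𝔽_q), let t ≥ 1, and let a_1,…,a_t ∈ 𝔽_{q^m}^* have pairwise distinct norms N_{q^m/q}(a_i). Let η ∈ 𝔽_{q^m} be such that N_{q^m/q}(η) does not belong to the subgroup of 𝔽_q^* generated by N_{q^m/q}(a_1),…,N_{q^m/q}(a_t). For i ∈ {1,…,t} set U_i = { (y + η·a_i·σ(a_i)·σ²(y), a_i·σ(y)) : y ∈ 𝔽_{q^m} } ⊆ 𝔽_{q^m}². Then Σ_{i=1}^t dim_{𝔽_q}(U_i ∩ S) ≤ 1 for every one-dimensional 𝔽_{q^m}-subspace S of 𝔽_{q^m}²; that is, the multi-linear set associated with (U_1,…,U_t) is scattered. -/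

import Mathlib

/-!
A nonzero vector of `U i` is `y • (1 + η c σ(c), c)` with slope `c = aᵢ σ(y) / y`,
whose norm is `N(aᵢ)`. Two such vectors on the same point give `c - e = η c e σ(c - e)`.
If `c ≠ e`, taking norms gives `N(η) N(aᵢ) N(aⱼ) = 1`, which the hypothesis on `η` excludes.
If `c = e`, the norms of `aᵢ` and `aⱼ` agree, so `i = j`, and then `σ` fixes `z / y`, which
therefore lies in `𝔽_q`: the two vectors are `𝔽_q`-proportional.
-/

/-- The `Fq`-linear map `y ↦ (y + η·a·σ(a)·σ²(y), a·σ(y))` from `Fqm` to `Fqm²`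
(the generic block map of a twisted linearized Reed–Solomon code). -/
noncomputable def twMap (Fq Fqm : Type) [Field Fq] [Field Fqm] [Algebra Fq Fqm]
    (σ : Fqm ≃ₐ[Fq] Fqm) (η a : Fqm) : Fqm →ₗ[Fq] (Fin 2 → Fqm) where
  toFun y := fun j => if j = 0 then y + η * (a * σ a) * σ (σ y) else a * σ y
  map_add' x y := by
    funext j
    by_cases h : j = 0 <;> simp only [Pi.add_apply, if_pos, if_neg, h, if_true, ite_true] <;>
      simp [map_add, mul_add] <;> ring
  map_smul' c x := by
    funext j
    by_cases h : j = 0 <;>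
      simp [h, _root_.map_smul, mul_smul_comm, smul_add]

open Module Finset

section OrbitNorm

variable {K L : Type*} [CommSemiring K] [Field L] [Algebra K L] (σ : L ≃ₐ[K] L) (m : ℕ)

def orbitNorm : L →* L where
  toFun x := ∏ l ∈ range m, (σ ^ l) x
  map_one' := by simp
  map_mul' x y := by simp [prod_mul_distrib]

theorem orbitNorm_apply (x : L) : orbitNorm σ m x = ∏ l ∈ range m, (σ ^ l) x := rfl

variable {σ m}

theorem orbitNorm_ne_zero {x : L} (hx : x ≠ 0) : orbitNorm σ m x ≠ 0 :=
  show ∏ l ∈ range m, (σ ^ l) x ≠ 0 from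
    prod_ne_zero_iff.2 fun l _ => (map_ne_zero (σ ^ l)).2 hx

theorem orbitNorm_apply_self (hσm : σ ^ m = 1) (x : L) :
    orbitNorm σ m (σ x) = orbitNorm σ m x := by
  rcases eq_or_ne x 0 with rfl | hx
  · simp
  refine mul_right_cancel₀ hx ?_
  have shift : ∀ l : ℕ, (σ ^ l) (σ x) = (σ ^ (l + 1)) x := fun l => by
    rw [pow_succ, AlgEquiv.mul_apply]
  calc orbitNorm σ m (σ x) * x = ∏ l ∈ range (m + 1), (σ ^ l) x := by
        simp [orbitNorm_apply, prod_range_succ', shift]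
    _ = orbitNorm σ m x * x := by rw [prod_range_succ, hσm, AlgEquiv.one_apply, orbitNorm_apply]

theorem orbitNorm_mul_apply_div_self (hσm : σ ^ m = 1) (a : L) {y : L} (hy : y ≠ 0) :
    orbitNorm σ m (a * σ y / y) = orbitNorm σ m a := by
  refine mul_right_cancel₀ (orbitNorm_ne_zero (σ := σ) (m := m) hy) ?_
  rw [← map_mul, div_mul_cancel₀ _ hy, map_mul, orbitNorm_apply_self hσm]

theorem orbitNorm_mul_mul_eq_one (hσm : σ ^ m = 1) {η c e : L} (hce : c ≠ e)
    (h : c - e = η * c * e * σ (c - e)) :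
    orbitNorm σ m η * orbitNorm σ m c * orbitNorm σ m e = 1 := by
  have hN := congrArg (orbitNorm σ m) h
  rw [map_mul, map_mul, map_mul, orbitNorm_apply_self hσm] at hN
  refine mul_right_cancel₀ (orbitNorm_ne_zero (σ := σ) (m := m) (sub_ne_zero.2 hce)) ?_
  rw [one_mul]
  exact hN.symm

end OrbitNorm

theorem mem_range_algebraMap_of_apply_eq_self {K L : Type*} [Field K] [Field L] [Algebra K L]
    [IsGalois K L] [FiniteDimensional K L] {σ : L ≃ₐ[K] L}
    (hσ : ∀ τ : L ≃ₐ[K] L, τ ∈ Subgroup.zpowers σ) {x : L} (hx : σ x = x) :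
    x ∈ Set.range (algebraMap K L) :=
  (IsGalois.mem_range_algebraMap_iff_fixed x).2 fun τ =>
    (Subgroup.zpowers_le (H := MulAction.stabilizer (L ≃ₐ[K] L) x)).2 hx (hσ τ)

theorem prod_zpow_neg_single_add_single {ι G : Type*} [Fintype ι] [DecidableEq ι]
    [CommGroupWithZero G] {g : ι → G} (hg : ∀ k, g k ≠ 0) (i j : ι) :
    ∏ k, g k ^ (-(Pi.single i 1 + Pi.single j 1 : ι → ℤ)) k = (g i * g j)⁻¹ := by
  simp_rw [Pi.neg_apply, Pi.add_apply, zpow_neg, zpow_add₀ (hg _), prod_inv_distrib,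
    prod_mul_distrib]
  simp [Pi.single_apply]

theorem sum_finrank_le_one_of_forall_mem {ι K V : Type*} [Fintype ι] [DivisionRing K]
    [AddCommGroup V] [Module K V] (W : ι → Submodule K V)
    (h : ∀ i j, ∀ v ∈ W i, ∀ w ∈ W j, v ≠ 0 → w ≠ 0 → i = j ∧ w ∈ K ∙ v) :
    ∑ i, finrank K (W i) ≤ 1 := by
  by_cases hW : ∀ i, W i = ⊥
  · rw [sum_eq_zero fun i _ => by rw [hW i, finrank_bot]]
    exact zero_le_one
  push Not at hW
  obtain ⟨i, hi⟩ := hW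
  obtain ⟨v, hv, hv0⟩ := Submodule.exists_mem_ne_zero_of_ne_bot hi
  have hj : ∀ j ≠ i, W j = ⊥ := fun j hji => (Submodule.eq_bot_iff _).2 fun w hw =>
    by_contra fun hw0 => hji (h i j v hv w hw hv0 hw0).1.symm
  have hle : W i ≤ K ∙ v := fun w hw => by
    rcases eq_or_ne w 0 with rfl | hw0
    · exact zero_mem _
    · exact (h i i v hv w hw hv0 hw0).2
  rw [sum_eq_single i (fun j _ hji => by rw [hj j hji, finrank_bot]) (by simp)]
  exact (Submodule.finrank_mono hle).trans (finrank_span_singleton hv0).le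

theorem mul_eq_mul_of_mem_of_finrank_eq_one {F : Type*} [Field F] {S : Submodule F (Fin 2 → F)}
    (hS : finrank F S = 1) {v w : Fin 2 → F} (hv : v ∈ S) (hw : w ∈ S) :
    v 0 * w 1 = v 1 * w 0 := by
  obtain ⟨u, -, hu⟩ := finrank_eq_one_iff'.1 hS
  obtain ⟨μ, hμ⟩ := hu ⟨v, hv⟩
  obtain ⟨ν, hν⟩ := hu ⟨w, hw⟩
  have hv' : μ • (u : Fin 2 → F) = v := congrArg Subtype.val hμ
  have hw' : ν • (u : Fin 2 → F) = w := congrArg Subtype.val hν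
  rw [← hv', ← hw']
  simp only [Pi.smul_apply, smul_eq_mul]
  ring

section TwMap

variable {Fq Fqm : Type} [Field Fq] [Field Fqm] [Algebra Fq Fqm] {σ : Fqm ≃ₐ[Fq] Fqm}
  {η : Fqm}

theorem twMap_apply_zero (a y : Fqm) :
    twMap Fq Fqm σ η a y 0 = y + η * (a * σ a) * σ (σ y) := rfl

theorem twMap_apply_one (a y : Fqm) : twMap Fq Fqm σ η a y 1 = a * σ y := rfl

/-- With slopes `c = a σ(y)/y` and `e = b σ(z)/z` the two vectors are `y (1 + η c σ(c), c)` and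
`z (1 + η e σ(e), e)`; this is the vanishing of their determinant. -/
theorem slope_sub_eq_of_twMap_mem {S : Submodule Fqm (Fin 2 → Fqm)} (hS : finrank Fqm S = 1)
    {a b y z : Fqm} (hy : y ≠ 0) (hz : z ≠ 0)
    (hyS : twMap Fq Fqm σ η a y ∈ S) (hzS : twMap Fq Fqm σ η b z ∈ S) :
    a * σ y / y - b * σ z / z =
      η * (a * σ y / y) * (b * σ z / z) * σ (a * σ y / y - b * σ z / z) := by
  have hdet := mul_eq_mul_of_mem_of_finrank_eq_one hS hyS hzS
  rw [twMap_apply_zero, twMap_apply_zero, twMap_apply_one, twMap_apply_one] at hdet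
  have hσy : σ y ≠ 0 := (map_ne_zero σ).2 hy
  have hσz : σ z ≠ 0 := (map_ne_zero σ).2 hz
  simp only [map_sub, map_mul, map_div₀]
  field_simp
  linear_combination -hdet

theorem apply_div_eq_of_slope_eq {a y z : Fqm} (ha : a ≠ 0) (hy : y ≠ 0) (hz : z ≠ 0)
    (h : a * σ y / y = a * σ z / z) : σ (z / y) = z / y := by
  have hσy : σ y ≠ 0 := (map_ne_zero σ).2 hy
  rw [map_div₀]
  field_simp at h ⊢
  linear_combination -h

end TwMap

theorem twistedLRS_scattered_general
    (Fq Fqm : Type) [Field Fq] [Field Fqm] [Fintype Fqm] [Algebra Fq Fqm]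
    (m : ℕ) (hm : Module.finrank Fq Fqm = m)
    (σ : Fqm ≃ₐ[Fq] Fqm) (hσ : ∀ τ : Fqm ≃ₐ[Fq] Fqm, τ ∈ Subgroup.zpowers σ)
    (t : ℕ)
    (a : Fin t → Fqm) (ha0 : ∀ i, a i ≠ 0)
    (hnorm : ∀ i j : Fin t,
      (∏ l ∈ Finset.range m, (σ ^ l) (a i)) = (∏ l ∈ Finset.range m, (σ ^ l) (a j)) → i = j)
    (η : Fqm)
    (hη : ∀ f : Fin t → ℤ,
      (∏ l ∈ Finset.range m, (σ ^ l) η)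
        ≠ ∏ i, (∏ l ∈ Finset.range m, (σ ^ l) (a i)) ^ (f i))
    (S : Submodule Fqm (Fin 2 → Fqm)) (hS : Module.finrank Fqm S = 1) :
    ∑ i, Module.finrank Fq
        ↥((⊤ : Submodule Fq Fqm).map (twMap Fq Fqm σ η (a i))
          ⊓ Submodule.restrictScalars Fq S) ≤ 1 := by
  have hσm : σ ^ m = 1 := by
    rw [← hm, ← IsGalois.card_aut_eq_finrank]
    exact pow_card_eq_one'
  simp only [← orbitNorm_apply] at hnorm hη
  refine sum_finrank_le_one_of_forall_mem _ fun i j w hw w' hw' hw0 hw'0 => ?_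
  obtain ⟨⟨y, -, rfl⟩, hyS⟩ := Submodule.mem_inf.1 hw
  obtain ⟨⟨z, -, rfl⟩, hzS⟩ := Submodule.mem_inf.1 hw'
  have hy : y ≠ 0 := by rintro rfl; exact hw0 (map_zero _)
  have hz : z ≠ 0 := by rintro rfl; exact hw'0 (map_zero _)
  have hslope := slope_sub_eq_of_twMap_mem hS hy hz hyS hzS
  by_cases hce : a i * σ y / y = a j * σ z / z
  · have hij : i = j := hnorm i j <| by
      rw [← orbitNorm_mul_apply_div_self hσm (a i) hy, hce,
        orbitNorm_mul_apply_div_self hσm (a j) hz]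
    subst hij
    obtain ⟨r, hr⟩ := mem_range_algebraMap_of_apply_eq_self hσ
      (apply_div_eq_of_slope_eq (ha0 i) hy hz hce)
    refine ⟨rfl, Submodule.mem_span_singleton.2 ⟨r, ?_⟩⟩
    rw [← map_smul, Algebra.smul_def, hr, div_mul_cancel₀ _ hy]
  · have key := orbitNorm_mul_mul_eq_one hσm hce hslope
    rw [orbitNorm_mul_apply_div_self hσm (a i) hy, orbitNorm_mul_apply_div_self hσm (a j) hz,
      mul_assoc] at key
    refine absurd ?_ (hη (-(Pi.single i 1 + Pi.single j 1)))
    rw [prod_zpow_neg_single_add_single (fun k => orbitNorm_ne_zero (ha0 k))]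
    exact eq_inv_of_mul_eq_one_left key

/-- the multi-linear set of a twisted linearized Reed–Solomon code is
scattered: if the `a i` have pairwise distinct norms and `N(η)` is not in the subgroup of
`𝔽_q^*` generated by the `N(a i)`, then the subspaces
`U i = {(y + η aᵢ σ(aᵢ) σ²(y), aᵢ σ(y)) : y ∈ Fqm}` satisfy
`∑ i dim_{Fq}(U i ∩ S) ≤ 1` for every one-dimensional `Fqm`-subspace `S` of `Fqm²`. -/
theorem twistedLRS_scattered
    (Fq Fqm : Type) [Field Fq] [Field Fqm] [Fintype Fq] [Fintype Fqm] [Algebra Fq Fqm]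
    (m : ℕ) (hm : Module.finrank Fq Fqm = m)
    (σ : Fqm ≃ₐ[Fq] Fqm) (hσ : ∀ τ : Fqm ≃ₐ[Fq] Fqm, τ ∈ Subgroup.zpowers σ)
    (t : ℕ) (ht : 1 ≤ t)
    (a : Fin t → Fqm) (ha0 : ∀ i, a i ≠ 0)
    (hnorm : ∀ i j : Fin t,
      (∏ l ∈ Finset.range m, (σ ^ l) (a i)) = (∏ l ∈ Finset.range m, (σ ^ l) (a j)) → i = j)
    (η : Fqm)
    (hη : ∀ f : Fin t → ℤ,
      (∏ l ∈ Finset.range m, (σ ^ l) η)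
        ≠ ∏ i, (∏ l ∈ Finset.range m, (σ ^ l) (a i)) ^ (f i))
    (S : Submodule Fqm (Fin 2 → Fqm)) (hS : Module.finrank Fqm S = 1) :
    ∑ i, Module.finrank Fq
        ↥((⊤ : Submodule Fq Fqm).map (twMap Fq Fqm σ η (a i))
          ⊓ Submodule.restrictScalars Fq S) ≤ 1 :=
  twistedLRS_scattered_general Fq Fqm m hm σ hσ t a ha0 hnorm η hη S hS
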